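/- For all q > r ≥ 1 and g ≥ 3 there exists C ≥ 1 such that for all n and all 1 ≤ t < s ≤ g: Δ_t(Cogirth^g_{K_q^r}(K_n^r)^{(s)}) ≤ C · C(n, q-r)^{s-t} · (1/n). That is, any t cliques in a cogirth-g-Erdős-configuration of total size s extend to at most C·C(n,q-r)^{s-t}/n such configurations. -/
import Mathlib


open Finset
open scoped Classical

/-- The packing `P` has girth at least `g`. -/
def GirthGe {α : Type*} [DecidableEq α] (q r : ℕ) (P : Finset (Finset α)) (g : ℕ) :
    Prop :=
  ∀ T ⊆ P, 2 ≤ T.card → T.card < g → (q - r) * T.card + r < (T.biUnion id).card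

/-- `P` is a `K_q^r`-packing of `K_n^r` of girth at least `g`. -/
def IsPackingGirthGe (n q r g : ℕ) (P : Finset (Finset (Fin n))) : Prop :=
  (∀ Q ∈ P, Q.card = q) ∧
    (∀ Q₁ ∈ P, ∀ Q₂ ∈ P, Q₁ ≠ Q₂ → (Q₁ ∩ Q₂).card < r) ∧ GirthGe q r P g

/-- `(S₁, S₂)` is a `(w₁,w₂)`-cogirth-`g`-configuration (with `wᵢ = |Sᵢ| ≥ 1`):
each `Sᵢ` is a `K_q^r`-packing of girth at least `g` and, viewed on the common ground
set, some `i` cliques of `S₁ ∪ S₂` with `2 ≤ i ≤ g-1` span at most `i(q-r)+r-1`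
vertices. -/
def IsCogirthConfig (n q r g : ℕ) (S₁ S₂ : Finset (Finset (Fin n))) : Prop :=
  S₁.Nonempty ∧ S₂.Nonempty ∧ IsPackingGirthGe n q r g S₁ ∧ IsPackingGirthGe n q r g S₂ ∧
    ∃ T₁ ⊆ S₁, ∃ T₂ ⊆ S₂, 2 ≤ T₁.card + T₂.card ∧ T₁.card + T₂.card ≤ g - 1 ∧
      ((T₁ ∪ T₂).biUnion id).card ≤ (T₁.card + T₂.card) * (q - r) + r - 1

/-- A cogirth-`g`-Erdős-configuration: an inclusion-minimal cogirth-`g`-configuration. -/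
def IsCogirthErdosConfig (n q r g : ℕ) (S₁ S₂ : Finset (Finset (Fin n))) : Prop :=
  IsCogirthConfig n q r g S₁ S₂ ∧
    ¬ ∃ S₁' ⊆ S₁, ∃ S₂' ⊆ S₂, S₁'.card + S₂'.card < S₁.card + S₂.card ∧
        IsCogirthConfig n q r g S₁' S₂'

private lemma aux_contra {a r X : ℕ} (hr : 1 ≤ r) (h1 : a + r < X) (h2 : X ≤ a + r - 1) :
    False := by omega

private lemma aux_ge {a r X : ℕ} (hr : 1 ≤ r) (h : ¬ X ≤ a + r - 1) : a + r ≤ X := by omega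

private lemma aux_W {M a b c r X Fc Wc : ℕ} (hr : 1 ≤ r) (hX : X ≤ c + r - 1)
    (hF : a + r ≤ Fc) (hW : Wc = X - Fc) (hsplit : c = a + b) (hM : M + 1 = b) :
    Wc ≤ M := by omega

private lemma packing_mono {n q r g : ℕ} {S S' : Finset (Finset (Fin n))} (hsub : S' ⊆ S)
    (h : IsPackingGirthGe n q r g S) : IsPackingGirthGe n q r g S' :=
  ⟨fun Q hQ => h.1 Q (hsub hQ), fun Q₁ h₁ Q₂ h₂ hne => h.2.1 Q₁ (hsub h₁) Q₂ (hsub h₂) hne,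
   fun T hT => h.2.2 T (hT.trans hsub)⟩

/-- for all `q > r ≥ 1` and `g ≥ 3` there exists `C ≥ 1` such that for all
`n` and `1 ≤ t < s ≤ g`, any `t` cliques extend to at most `C·C(n,q-r)^{s-t}/n`
cogirth-`g`-Erdős-configurations of total size `s`:
`Δ_t(Cogirth^g_{K_q^r}(K_n^r)^{(s)}) ≤ C·C(n,q-r)^{s-t}/n`. -/
theorem stmt_15 (q r g : ℕ) (hr : 1 ≤ r) (hqr : r < q) (hg : 3 ≤ g) :
    ∃ C : ℝ, 1 ≤ C ∧ ∀ (n t s : ℕ), 1 ≤ t → t < s → s ≤ g →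
      ∀ U₁ U₂ : Finset (Finset (Fin n)), U₁.card + U₂.card = t →
        (((((univ : Finset (Fin n)).powersetCard q).powerset ×ˢ
            ((univ : Finset (Fin n)).powersetCard q).powerset).filter fun P =>
              IsCogirthErdosConfig n q r g P.1 P.2 ∧ U₁ ⊆ P.1 ∧ U₂ ⊆ P.2 ∧
                P.1.card + P.2.card = s).card : ℝ) ≤
          C * ((n.choose (q - r) : ℝ)) ^ (s - t) / (n : ℝ) := by
  have hk1 : 1 ≤ q - r := by omega
  have hkq : q - r ≤ q := by omega
  set B : ℕ := 2 ^ 2 ^ (2 * (g * q)) with hB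
  set D : ℕ := (g * q + 1) * (B * B) * (q ^ q * Nat.factorial q) ^ g with hD
  have hD1 : 1 ≤ D := by
    have hq0 : 0 < q := by omega
    have h2 : 0 < (2:ℕ) ^ 2 ^ (2 * (g * q)) := pow_pos (by norm_num) _
    have h3 : 0 < q ^ q * Nat.factorial q := Nat.mul_pos (pow_pos hq0 q) (Nat.factorial_pos q)
    have : 0 < D := by
      rw [hD, hB]
      exact Nat.mul_pos (Nat.mul_pos (by omega) (Nat.mul_pos h2 h2)) (pow_pos h3 g)
    omega
  refine ⟨(D : ℝ), by exact_mod_cast hD1, ?_⟩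
  intro n t s ht hts hsg U₁ U₂ hU
  set 𝒜 := ((((univ : Finset (Fin n)).powersetCard q).powerset ×ˢ
            ((univ : Finset (Fin n)).powersetCard q).powerset).filter fun P =>
              IsCogirthErdosConfig n q r g P.1 P.2 ∧ U₁ ⊆ P.1 ∧ U₂ ⊆ P.2 ∧
                P.1.card + P.2.card = s) with h𝒜
  rcases 𝒜.eq_empty_or_nonempty with hAe | hAne
  · rw [hAe]
    simp only [card_empty, Nat.cast_zero]
    positivity
  -- basic facts from nonemptiness
  obtain ⟨P₀, hP₀⟩ := hAne
  rw [h𝒜, mem_filter] at hP₀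
  obtain ⟨hP₀m, hcfg₀, hU₁₀, hU₂₀, hcard₀⟩ := hP₀
  have hP₀m' := mem_product.mp hP₀m
  have hqn : q ≤ n := by
    obtain ⟨Q, hQ⟩ := hcfg₀.1.1
    have hQ' : Q ∈ (univ : Finset (Fin n)).powersetCard q :=
      (mem_powerset.mp hP₀m'.1) hQ
    have hQc : Q.card = q := (mem_powersetCard.mp hQ').2
    calc q = Q.card := hQc.symm
      _ ≤ (univ : Finset (Fin n)).card := card_le_univ Q
      _ = n := by simp
  have hUq : ∀ Q ∈ U₁ ∪ U₂, Q.card = q := by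
    intro Q hQ
    rcases mem_union.mp hQ with h | h
    · exact (mem_powersetCard.mp ((mem_powerset.mp hP₀m'.1) (hU₁₀ h))).2
    · exact (mem_powersetCard.mp ((mem_powerset.mp hP₀m'.2) (hU₂₀ h))).2
  set F := (U₁ ∪ U₂).biUnion id with hF
  have hFcard : F.card ≤ t * q := by
    calc F.card ≤ ∑ Q ∈ U₁ ∪ U₂, (id Q).card := card_biUnion_le
      _ ≤ (U₁ ∪ U₂).card * q := by
          rw [← smul_eq_mul]
          exact Finset.sum_le_card_nsmul _ _ _ (fun Q hQ => le_of_eq (hUq Q hQ))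
      _ ≤ (U₁.card + U₂.card) * q := Nat.mul_le_mul_right _ (card_union_le _ _)
      _ = t * q := by rw [hU]
  have hstk : 1 ≤ (s - t) * (q - r) := Nat.one_le_iff_ne_zero.mpr
    (Nat.pos_iff_ne_zero.mp (Nat.mul_pos (by omega) (by omega)))
  obtain ⟨M, hM1⟩ : ∃ M, M + 1 = (s - t) * (q - r) := ⟨_, Nat.sub_add_cancel hstk⟩
  have hMgq : M + 1 ≤ g * q := by
    rw [hM1]; exact Nat.mul_le_mul (by omega) hkq
  -- the inclusion into a small union
  have hsub𝒜 : 𝒜 ⊆ ((univ : Finset (Fin n)).powerset.filter fun W => W.card ≤ M).biUnion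
      (fun W => (F ∪ W).powerset.powerset ×ˢ (F ∪ W).powerset.powerset) := by
    rintro ⟨S₁, S₂⟩ hP
    rw [h𝒜, mem_filter] at hP
    obtain ⟨hPm, hP2⟩ := hP
    dsimp only at hP2
    obtain ⟨hcfg, hu1, hu2, hcards⟩ := hP2
    obtain ⟨⟨hne1, hne2, hp1, hp2, hw⟩, hmin⟩ := hcfg
    obtain ⟨T₁, hT₁, T₂, hT₂, h2c, hcg, hTspan⟩ := hw
    have hT1ne : T₁.Nonempty := by
      rw [nonempty_iff_ne_empty]
      rintro rfl
      simp only [card_empty, Nat.zero_add, empty_union] at h2c hcg hTspan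
      have hg' := hp2.2.2 T₂ hT₂ h2c (by omega)
      rw [Nat.mul_comm] at hg'
      exact aux_contra hr hg' hTspan
    have hT2ne : T₂.Nonempty := by
      rw [nonempty_iff_ne_empty]
      rintro rfl
      simp only [card_empty, Nat.add_zero, union_empty] at h2c hcg hTspan
      have hg' := hp1.2.2 T₁ hT₁ h2c (by omega)
      rw [Nat.mul_comm] at hg'
      exact aux_contra hr hg' hTspan
    have hTcfg : IsCogirthConfig n q r g T₁ T₂ :=
      ⟨hT1ne, hT2ne, packing_mono hT₁ hp1, packing_mono hT₂ hp2,
        T₁, Finset.Subset.refl _, T₂, Finset.Subset.refl _, h2c, hcg, hTspan⟩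
    have hnot : ¬ (T₁.card + T₂.card < S₁.card + S₂.card) := fun hlt =>
      hmin ⟨T₁, hT₁, T₂, hT₂, hlt, hTcfg⟩
    have c1 := card_le_card hT₁
    have c2 := card_le_card hT₂
    have hTe1 : T₁ = S₁ := eq_of_subset_of_card_le hT₁ (by omega)
    have hTe2 : T₂ = S₂ := eq_of_subset_of_card_le hT₂ (by omega)
    rw [hTe1, hTe2, hcards] at hTspan
    -- lower bound on the fixed span
    have hFlb : t * (q - r) + r ≤ F.card := by
      rcases U₁.eq_empty_or_nonempty with h1e | h1ne
      · have hFeq : F = U₂.biUnion id := by rw [hF, h1e, empty_union]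
        have hU2c : U₂.card = t := by
          have := hU; rw [h1e, card_empty] at this; omega
        rcases Nat.lt_or_ge t 2 with ht2 | ht2
        · have ht1 : t = 1 := by omega
          obtain ⟨Q, hQe⟩ := card_eq_one.mp (by rw [hU2c, ht1] : U₂.card = 1)
          have hQq : Q.card = q := hUq Q (by rw [hQe]; simp [mem_union])
          have : F.card = q := by
            rw [hFeq, hQe, singleton_biUnion, id_eq, hQq]
          rw [ht1, Nat.one_mul]
          omega
        · have hg' := hp2.2.2 U₂ hu2 (by omega) (by omega)
          rw [hFeq, ← hU2c, Nat.mul_comm]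
          exact hg'.le
      rcases U₂.eq_empty_or_nonempty with h2e | h2ne
      · have hFeq : F = U₁.biUnion id := by rw [hF, h2e, union_empty]
        have hU1c : U₁.card = t := by
          have := hU; rw [h2e, card_empty] at this; omega
        rcases Nat.lt_or_ge t 2 with ht2 | ht2
        · have ht1 : t = 1 := by omega
          obtain ⟨Q, hQe⟩ := card_eq_one.mp (by rw [hU1c, ht1] : U₁.card = 1)
          have hQq : Q.card = q := hUq Q (by rw [hQe]; simp [mem_union])
          have : F.card = q := by
            rw [hFeq, hQe, singleton_biUnion, id_eq, hQq]
          rw [ht1, Nat.one_mul]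
          omega
        · have hg' := hp1.2.2 U₁ hu1 (by omega) (by omega)
          rw [hFeq, ← hU1c, Nat.mul_comm]
          exact hg'.le
      · have h1c := card_pos.mpr h1ne
        have h2c' := card_pos.mpr h2ne
        have hnotcfg : ¬ IsCogirthConfig n q r g U₁ U₂ := fun hc =>
          hmin ⟨U₁, hu1, U₂, hu2, by omega, hc⟩
        have hnotspan : ¬ F.card ≤ (U₁.card + U₂.card) * (q - r) + r - 1 := by
          intro hc
          exact hnotcfg ⟨h1ne, h2ne, packing_mono hu1 hp1, packing_mono hu2 hp2,
            U₁, Finset.Subset.refl _, U₂, Finset.Subset.refl _, by omega,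
            by omega, hc⟩
        rw [hU] at hnotspan
        exact aux_ge hr hnotspan
    -- the new vertices
    have hFsub : F ⊆ (S₁ ∪ S₂).biUnion id := by
      rw [hF]
      exact biUnion_subset_biUnion_of_subset_left _ (union_subset_union hu1 hu2)
    have hWcard : ((S₁ ∪ S₂).biUnion id \ F).card ≤ M := by
      refine aux_W (a := t * (q - r)) (b := (s - t) * (q - r)) (c := s * (q - r)) hr
        hTspan hFlb (card_sdiff_of_subset hFsub) ?_ hM1
      rw [← Nat.add_mul]
      congr 1
      omega
    have hspansub : ∀ Q ∈ S₁ ∪ S₂, Q ⊆ F ∪ ((S₁ ∪ S₂).biUnion id \ F) := by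
      intro Q hQ x hx
      have hxs : x ∈ (S₁ ∪ S₂).biUnion id := mem_biUnion.mpr ⟨Q, hQ, hx⟩
      by_cases hxF : x ∈ F
      · exact mem_union_left _ hxF
      · exact mem_union_right _ (mem_sdiff.mpr ⟨hxs, hxF⟩)
    rw [mem_biUnion]
    refine ⟨(S₁ ∪ S₂).biUnion id \ F, ?_, ?_⟩
    · rw [mem_filter, mem_powerset]
      exact ⟨subset_univ _, hWcard⟩
    · rw [mem_product]
      constructor
      · rw [mem_powerset]
        intro Q hQ
        rw [mem_powerset]
        exact hspansub Q (mem_union_left _ hQ)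
      · rw [mem_powerset]
        intro Q hQ
        rw [mem_powerset]
        exact hspansub Q (mem_union_right _ hQ)
  -- counting the union
  have hWsetcard : ((univ : Finset (Fin n)).powerset.filter fun W => W.card ≤ M).card
      ≤ (M + 1) * n ^ M := by
    have hsub : ((univ : Finset (Fin n)).powerset.filter fun W => W.card ≤ M)
        ⊆ (range (M + 1)).biUnion (fun m => (univ : Finset (Fin n)).powersetCard m) := by
      intro W hW
      rw [mem_biUnion]
      exact ⟨W.card, mem_range.mpr (by have := (mem_filter.mp hW).2; omega),
        mem_powersetCard.mpr ⟨subset_univ _, rfl⟩⟩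
    calc _ ≤ ((range (M + 1)).biUnion
          (fun m => (univ : Finset (Fin n)).powersetCard m)).card := card_le_card hsub
      _ ≤ ∑ m ∈ range (M + 1), ((univ : Finset (Fin n)).powersetCard m).card :=
          card_biUnion_le
      _ ≤ ∑ _m ∈ range (M + 1), n ^ M := by
          refine sum_le_sum (fun m hm => ?_)
          rw [card_powersetCard, card_univ, Fintype.card_fin]
          calc n.choose m ≤ n ^ m := Nat.choose_le_pow n m
            _ ≤ n ^ M := Nat.pow_le_pow_right (by omega) (by
                have := mem_range.mp hm; omega)
      _ = (M + 1) * n ^ M := by rw [sum_const, card_range, smul_eq_mul]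
  have hcount : 𝒜.card ≤ (M + 1) * n ^ M * (B * B) := by
    calc 𝒜.card ≤ (((univ : Finset (Fin n)).powerset.filter fun W => W.card ≤ M).biUnion
          (fun W => (F ∪ W).powerset.powerset ×ˢ (F ∪ W).powerset.powerset)).card :=
        card_le_card hsub𝒜
      _ ≤ ∑ W ∈ ((univ : Finset (Fin n)).powerset.filter fun W => W.card ≤ M),
          ((F ∪ W).powerset.powerset ×ˢ (F ∪ W).powerset.powerset).card := card_biUnion_le
      _ ≤ ((univ : Finset (Fin n)).powerset.filter fun W => W.card ≤ M).card * (B * B) := by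
          rw [← smul_eq_mul]
          refine Finset.sum_le_card_nsmul _ _ _ (fun W hW => ?_)
          have hWc : W.card ≤ M := (mem_filter.mp hW).2
          have hFW : (F ∪ W).card ≤ 2 * (g * q) := by
            calc (F ∪ W).card ≤ F.card + W.card := card_union_le _ _
              _ ≤ t * q + M := Nat.add_le_add hFcard hWc
              _ ≤ g * q + g * q := by
                  have h1 : t * q ≤ g * q := Nat.mul_le_mul_right q (by omega)
                  omega
              _ = 2 * (g * q) := by ring
          simp only [card_product, card_powerset]
          have hple : 2 ^ 2 ^ (F ∪ W).card ≤ B := by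
            rw [hB]
            exact Nat.pow_le_pow_right (by norm_num)
              (Nat.pow_le_pow_right (by norm_num) hFW)
          exact Nat.mul_le_mul hple hple
      _ ≤ (M + 1) * n ^ M * (B * B) := Nat.mul_le_mul_right _ hWsetcard
  -- the binomial lower bound
  have hqnk : n ≤ q * (n + 1 - (q - r)) := by
    obtain ⟨d, rfl⟩ : ∃ d, n = q + d := ⟨n - q, by omega⟩
    have h2 : q + d + 1 - (q - r) = r + d + 1 := by omega
    rw [h2]
    have hq1 : 1 ≤ q := by omega
    nlinarith [hq1, hr]
  have hnk : n ^ (q - r) ≤ (q ^ (q - r) * Nat.factorial (q - r)) * n.choose (q - r) := by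
    calc n ^ (q - r) ≤ (q * (n + 1 - (q - r))) ^ (q - r) := Nat.pow_le_pow_left hqnk _
      _ = q ^ (q - r) * (n + 1 - (q - r)) ^ (q - r) := by rw [Nat.mul_pow]
      _ ≤ q ^ (q - r) * n.descFactorial (q - r) :=
          Nat.mul_le_mul_left _ (Nat.pow_sub_le_descFactorial n _)
      _ = q ^ (q - r) * (Nat.factorial (q - r) * n.choose (q - r)) := by
          rw [Nat.descFactorial_eq_factorial_mul_choose]
      _ = (q ^ (q - r) * Nat.factorial (q - r)) * n.choose (q - r) := by ring
  have hpow : n ^ (M + 1) ≤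
      (q ^ (q - r) * Nat.factorial (q - r)) ^ (s - t) * (n.choose (q - r)) ^ (s - t) := by
    rw [hM1, Nat.mul_comm (s - t) (q - r), Nat.pow_mul, ← Nat.mul_pow]
    exact Nat.pow_le_pow_left hnk _
  have hconst : (M + 1) * (B * B) * (q ^ (q - r) * Nat.factorial (q - r)) ^ (s - t) ≤ D := by
    rw [hD]
    have e2 : (q ^ (q - r) * Nat.factorial (q - r)) ^ (s - t)
        ≤ (q ^ q * Nat.factorial q) ^ g := by
      calc (q ^ (q - r) * Nat.factorial (q - r)) ^ (s - t)
          ≤ (q ^ q * Nat.factorial q) ^ (s - t) :=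
            Nat.pow_le_pow_left
              (Nat.mul_le_mul (Nat.pow_le_pow_right (by omega) hkq)
                (Nat.factorial_le hkq)) _
        _ ≤ (q ^ q * Nat.factorial q) ^ g :=
            Nat.pow_le_pow_right
              (Nat.mul_pos (pow_pos (by omega) q) (Nat.factorial_pos q)) (by omega)
    exact Nat.mul_le_mul (Nat.mul_le_mul_right _ (by omega)) e2
  have hkey : 𝒜.card * n ≤ D * (n.choose (q - r)) ^ (s - t) := by
    calc 𝒜.card * n ≤ ((M + 1) * n ^ M * (B * B)) * n := Nat.mul_le_mul_right _ hcount
      _ = (M + 1) * (B * B) * n ^ (M + 1) := by ring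
      _ ≤ (M + 1) * (B * B) *
          ((q ^ (q - r) * Nat.factorial (q - r)) ^ (s - t) * (n.choose (q - r)) ^ (s - t)) :=
          Nat.mul_le_mul_left _ hpow
      _ = ((M + 1) * (B * B) * (q ^ (q - r) * Nat.factorial (q - r)) ^ (s - t)) *
          (n.choose (q - r)) ^ (s - t) := by ring
      _ ≤ D * (n.choose (q - r)) ^ (s - t) := Nat.mul_le_mul_right _ hconst
  have hn0 : (0 : ℝ) < (n : ℝ) := by
    have : 0 < n := by omega
    exact_mod_cast this
  rw [le_div_iff₀ hn0]
  exact_mod_cast hkey
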